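/- arXiv:1801.08476 — 3 statements merged into one kernel-verified Lean document; each statement's English description precedes it below -/
import Mathlib

section
/- Let $n \ge 2$, $d \ge 2$ be integers, $m = \lfloor n/2 \rfloor$, and suppose a triangular linear system $\sum_{j=1}^{l} d^{-2m-l-j}\binom{m+l}{m+j} x_j = d^{-(n-m-l)} - d^{-(m+l)}$ holds for all $l = 1, \dots, i$. Then $x_1 = d^{m+1}\left(\frac{d^{2(m+1)}}{d^n} - 1\right)$. -/
theorem trace_P_m_plus_one (n d i : ℕ) (hn : 2 ≤ n) (hd : 2 ≤ d) (hi : 1 ≤ i)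
    (m : ℕ) (hm : m = n / 2) (x : ℕ → ℝ)
    (hsys : ∀ l, 1 ≤ l → l ≤ i →
      ∑ j ∈ Finset.Icc 1 l,
        (d : ℝ) ^ (-(2 * (m : ℤ) + l + j)) * ((m + l).choose (m + j)) * x j
      = (d : ℝ) ^ (-((n : ℤ) - m - l)) - (d : ℝ) ^ (-((m : ℤ) + l))) :
    x 1 = (d : ℝ) ^ (m + 1) * ((d : ℝ) ^ (2 * (m + 1)) / (d : ℝ) ^ n - 1) := by
  have hd0 : (d : ℝ) ≠ 0 := by positivity
  have h := hsys 1 le_rfl hi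
  rw [Finset.Icc_self, Finset.sum_singleton] at h
  simp only [Nat.cast_one, Nat.choose_self] at h
  have hx : x 1 = (d : ℝ) ^ (2 * (m : ℤ) + 1 + 1) *
      ((d : ℝ) ^ (-((n : ℤ) - m - 1)) - (d : ℝ) ^ (-((m : ℤ) + 1))) := by
    rw [mul_one] at h
    rw [← h, ← mul_assoc, ← zpow_add₀ hd0, add_neg_cancel, zpow_zero, one_mul]
  rw [hx, mul_sub, ← zpow_add₀ hd0, ← zpow_add₀ hd0]
  have e1 : (2 * (m : ℤ) + 1 + 1) + -((n : ℤ) - m - 1) = (3 * m + 3 : ℕ) - (n : ℤ) := by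
    push_cast; ring
  have e2 : (2 * (m : ℤ) + 1 + 1) + -((m : ℤ) + 1) = ((m + 1 : ℕ) : ℤ) := by
    push_cast; ring
  rw [e1, e2, zpow_sub₀ hd0, zpow_natCast, zpow_natCast]
  rw [mul_sub, mul_one, mul_div_assoc', ← pow_add]
  have : m + 1 + 2 * (m + 1) = 3 * m + 3 := by ring
  rw [this]
  norm_cast
end

section
/- Let $n \ge 2$, $d \ge 2$, $i \ge 1$ be integers with $m = \lfloor n/2 \rfloor$ and $m + i \le n$. Suppose for each $l = 1, \dots, i$ the value $x_l$ satisfies the triangular system $\sum_{j=1}^{l} d^{-2m-l-j}\binom{m+l}{m+j} x_j = d^{-(n-m-l)} - d^{-(m+l)}$. Then $x_i = \sum_{j=1}^{i} (-1)^{i+j} d^{2m+i+j} \binom{m+i}{m+j} \left( d^{-(n-m-j)} - d^{-(m+j)} \right)$. -/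
/-!
The coefficient matrix of the system is `D P D` with `D = diag (d ^ (-(m + l)))` and
`P l j = (m + l).choose (m + j)` a lower-triangular block of Pascal's matrix. Binomial inversion,
`∑ j, (-1) ^ (j + k) * l.choose j * j.choose k = δ l k`, shows that `P⁻¹` is `P` with signs
`(-1) ^ (l + j)`, so the inverse matrix is `D⁻¹ P⁻¹ D⁻¹`, whose `l`-th row applied to the
right-hand side is the closed form. A lower-triangular system with nonzero diagonal has only one
solution.
-/

open Finset

theorem sum_Icc_neg_one_pow_mul_choose_mul_choose {R : Type*} [CommRing R] {k l : ℕ}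
    (hkl : k ≤ l) :
    ∑ j ∈ Icc k l, (-1 : R) ^ (j + k) * (l.choose j * j.choose k : ℕ)
      = if l = k then 1 else 0 := by
  have hchoose (t : ℕ) : l.choose (k + t) * (k + t).choose k = l.choose k * (l - k).choose t := by
    rw [Nat.choose_mul (by omega), Nat.add_sub_cancel_left]
  have hsign (t : ℕ) : (-1 : R) ^ (k + t + k) = (-1) ^ t := by
    rw [add_right_comm, ← two_mul, pow_add, pow_mul, neg_one_sq, one_pow, one_mul]
  have halt : ∑ t ∈ range (l - k + 1), (-1 : R) ^ t * ((l - k).choose t : ℕ)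
      = if l - k = 0 then 1 else 0 := by
    exact_mod_cast congrArg (Int.cast : ℤ → R) (Int.alternating_sum_range_choose (n := l - k))
  rw [← Ico_add_one_right_eq_Icc, sum_Ico_eq_sum_range, Nat.sub_add_comm hkl]
  simp only [hchoose, hsign, Nat.cast_mul, mul_left_comm _ (l.choose k : R), ← mul_sum, halt]
  split_ifs <;> first | omega | simp_all

theorem sum_Icc_neg_one_pow_mul_choose_add_mul_choose_add {R : Type*} [CommRing R] (m : ℕ)
    {k l : ℕ} (hkl : k ≤ l) :
    ∑ j ∈ Icc k l, (-1 : R) ^ (j + k) * ((m + l).choose (m + j) * (m + j).choose (m + k) : ℕ)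
      = if l = k then 1 else 0 := by
  have hsign (j : ℕ) : (-1 : R) ^ (m + j + (m + k)) = (-1) ^ (j + k) := by
    rw [show m + j + (m + k) = j + k + 2 * m by ring, pow_add _ (j + k), pow_mul, neg_one_sq,
      one_pow, mul_one]
  have h := sum_map (Icc k l) (addLeftEmbedding m) fun J => (-1 : R) ^ (J + (m + k)) *
    ((m + l).choose J * J.choose (m + k) : ℕ)
  rw [map_add_left_Icc, sum_Icc_neg_one_pow_mul_choose_mul_choose (by omega)] at h
  simpa [hsign] using h.symm

theorem sum_Icc_mul_sum_Icc_mul_eq_of_sum_mul_eq_ite {R : Type*} [CommSemiring R]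
    {A B : ℕ → ℕ → R} {l : ℕ} (hl : 1 ≤ l)
    (hAB : ∀ k ∈ Icc 1 l, ∑ j ∈ Icc k l, A l j * B j k = if l = k then 1 else 0) (b : ℕ → R) :
    ∑ j ∈ Icc 1 l, A l j * ∑ k ∈ Icc 1 j, B j k * b k = b l := by
  simp only [mul_sum]
  rw [sum_comm' (t' := Icc 1 l) (s' := fun k => Icc k l)
    (by intro j k; simp only [mem_Icc]; omega)]
  simp only [← mul_assoc, ← sum_mul]
  rw [sum_congr rfl fun k hk => congrArg (· * b k) (hAB k hk)]
  simp [ite_mul, hl]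

theorem eq_of_sum_Icc_mul_eq {R : Type*} [Ring R] [NoZeroDivisors R] {a : ℕ → ℕ → R}
    {x y b : ℕ → R} {i : ℕ} (ha : ∀ l ∈ Icc 1 i, a l l ≠ 0)
    (hx : ∀ l ∈ Icc 1 i, ∑ j ∈ Icc 1 l, a l j * x j = b l)
    (hy : ∀ l ∈ Icc 1 i, ∑ j ∈ Icc 1 l, a l j * y j = b l) :
    ∀ l ∈ Icc 1 i, x l = y l := by
  intro l
  induction l using Nat.strong_induction_on with
  | _ l ih =>
    intro hl
    have hl1 : 1 ≤ l := (mem_Icc.mp hl).1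
    have hlower : ∑ j ∈ Ico 1 l, a l j * x j = ∑ j ∈ Ico 1 l, a l j * y j :=
      sum_congr rfl fun j hj => by
        obtain ⟨hj1, hjl⟩ := mem_Ico.mp hj
        rw [ih j hjl (mem_Icc.mpr ⟨hj1, hjl.le.trans (mem_Icc.mp hl).2⟩)]
    have hdiag := (hx l hl).trans (hy l hl).symm
    rw [← Ico_add_one_right_eq_Icc, sum_Ico_succ_top hl1, sum_Ico_succ_top hl1, hlower,
      add_left_cancel_iff] at hdiag
    exact mul_left_cancel₀ (ha l hl) hdiag

def scaledPascal {K : Type*} [Field K] (d : K) (m l j : ℕ) : K :=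
  d ^ (-(2 * (m : ℤ) + l + j)) * (m + l).choose (m + j)

def scaledPascalInv {K : Type*} [Field K] (d : K) (m l j : ℕ) : K :=
  (-1) ^ (l + j) * d ^ (2 * (m : ℤ) + l + j) * (m + l).choose (m + j)

theorem sum_scaledPascal_mul_scaledPascalInv {K : Type*} [Field K] {d : K} (hd : d ≠ 0)
    (m : ℕ) {k l : ℕ} (hkl : k ≤ l) :
    ∑ j ∈ Icc k l, scaledPascal d m l j * scaledPascalInv d m j k = if l = k then 1 else 0 := by
  have hterm (j : ℕ) : scaledPascal d m l j * scaledPascalInv d m j k = d ^ ((k : ℤ) - l) *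
      ((-1) ^ (j + k) * ((m + l).choose (m + j) * (m + j).choose (m + k) : ℕ)) := by
    calc scaledPascal d m l j * scaledPascalInv d m j k
        = (d ^ (-(2 * (m : ℤ) + l + j)) * d ^ (2 * (m : ℤ) + j + k)) *
            ((-1) ^ (j + k) * ((m + l).choose (m + j) * (m + j).choose (m + k) : ℕ)) := by
          rw [scaledPascal, scaledPascalInv, Nat.cast_mul]; ring
      _ = _ := by rw [← zpow_add₀ hd]; congr 2; ring
  rw [sum_congr rfl fun j _ => hterm j, ← mul_sum,
    sum_Icc_neg_one_pow_mul_choose_add_mul_choose_add m hkl]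
  split_ifs with h <;> simp [h]

theorem trace_closed_form_general (n d i : ℕ) (hd : 2 ≤ d) (hi : 1 ≤ i)
    (m : ℕ) (x : ℕ → ℝ)
    (hsys : ∀ l, 1 ≤ l → l ≤ i →
      ∑ j ∈ Finset.Icc 1 l,
        (d : ℝ) ^ (-(2 * (m : ℤ) + l + j)) * ((m + l).choose (m + j)) * x j
      = (d : ℝ) ^ (-((n : ℤ) - m - l)) - (d : ℝ) ^ (-((m : ℤ) + l))) :
    x i = ∑ j ∈ Finset.Icc 1 i,
      (-1 : ℝ) ^ (i + j) * (d : ℝ) ^ ((2 * (m : ℤ) + i + j)) * ((m + i).choose (m + j))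
        * ((d : ℝ) ^ (-((n : ℤ) - m - j)) - (d : ℝ) ^ (-((m : ℤ) + j))) := by
  have hd0 : (d : ℝ) ≠ 0 := Nat.cast_ne_zero.mpr (by omega)
  set b : ℕ → ℝ := fun l => (d : ℝ) ^ (-((n : ℤ) - m - l)) - (d : ℝ) ^ (-((m : ℤ) + l))
  have hdiag (l : ℕ) : scaledPascal (d : ℝ) m l l ≠ 0 := by
    simpa [scaledPascal] using zpow_ne_zero _ hd0
  have hinv (l : ℕ) (hl : 1 ≤ l) :
      ∑ j ∈ Icc 1 l, scaledPascal (d : ℝ) m l j *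
        ∑ k ∈ Icc 1 j, scaledPascalInv (d : ℝ) m j k * b k = b l :=
    sum_Icc_mul_sum_Icc_mul_eq_of_sum_mul_eq_ite hl
      (fun k hk => sum_scaledPascal_mul_scaledPascalInv hd0 m (mem_Icc.mp hk).2) b
  exact eq_of_sum_Icc_mul_eq (fun l _ => hdiag l)
    (fun l hl => hsys l (mem_Icc.mp hl).1 (mem_Icc.mp hl).2)
    (fun l hl => hinv l (mem_Icc.mp hl).1)
    i (mem_Icc.mpr ⟨hi, le_rfl⟩)

theorem trace_closed_form (n d i : ℕ) (hn : 2 ≤ n) (hd : 2 ≤ d) (hi : 1 ≤ i)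
    (m : ℕ) (hm : m = n / 2) (hmi : m + i ≤ n) (x : ℕ → ℝ)
    (hsys : ∀ l, 1 ≤ l → l ≤ i →
      ∑ j ∈ Finset.Icc 1 l,
        (d : ℝ) ^ (-(2 * (m : ℤ) + l + j)) * ((m + l).choose (m + j)) * x j
      = (d : ℝ) ^ (-((n : ℤ) - m - l)) - (d : ℝ) ^ (-((m : ℤ) + l))) :
    x i = ∑ j ∈ Finset.Icc 1 i,
      (-1 : ℝ) ^ (i + j) * (d : ℝ) ^ ((2 * (m : ℤ) + i + j)) * ((m + i).choose (m + j))
        * ((d : ℝ) ^ (-((n : ℤ) - m - j)) - (d : ℝ) ^ (-((m : ℤ) + j))) :=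
  trace_closed_form_general n d i hd hi m x hsys
end

section
/- With the notation of the two triangular systems above (same right-hand sides $T_l = R_l = d^{-(n-m-l)} - d^{-(m+l)}$, coefficient matrices $A_{lj} = d^{-2m-l-j}\binom{m+l}{m+j}$ and $B_{lj} = d^{-m-l}\binom{m+l}{m+j}$ for $j \le l$), the solutions satisfy $x_i = d^{m+i} y_i$ for every $i \ge 1$. -/
theorem trace_eq_d_pow_eigenvalue (n d : ℕ) (hn : 2 ≤ n) (hd : 2 ≤ d)
    (m : ℕ) (hm : m = n / 2) (x y : ℕ → ℝ)
    (hx : ∀ l : ℕ, 1 ≤ l →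
      ∑ j ∈ Finset.Icc 1 l,
        (d : ℝ) ^ (-(2 * (m : ℤ) + l + (j : ℤ))) * ((m + l).choose (m + j)) * x j
      = (d : ℝ) ^ (-((n : ℤ) - m - l)) - (d : ℝ) ^ (-((m : ℤ) + l)))
    (hy : ∀ l : ℕ, 1 ≤ l →
      ∑ j ∈ Finset.Icc 1 l,
        (d : ℝ) ^ (-((m : ℤ) + l)) * ((m + l).choose (m + j)) * y j
      = (d : ℝ) ^ (-((n : ℤ) - m - l)) - (d : ℝ) ^ (-((m : ℤ) + l))) :
    ∀ i, 1 ≤ i → x i = (d : ℝ) ^ (m + i) * y i := by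
  have hd0 : (d : ℝ) ≠ 0 := by
    have : (0:ℝ) < d := by exact_mod_cast lt_of_lt_of_le two_pos hd
    exact ne_of_gt this
  intro i
  induction i using Nat.strong_induction_on with
  | _ i IH =>
    intro hi
    have key : ∑ j ∈ Finset.Icc 1 i,
        ((d : ℝ) ^ (-(2 * (m : ℤ) + i + (j : ℤ))) * ((m + i).choose (m + j)) * x j
         - (d : ℝ) ^ (-((m : ℤ) + i)) * ((m + i).choose (m + j)) * y j) = 0 := by
      rw [Finset.sum_sub_distrib, sub_eq_zero, hx i hi, hy i hi]
    have hterm : ∀ j ∈ Finset.Icc 1 i, j ≠ i →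
        ((d : ℝ) ^ (-(2 * (m : ℤ) + i + (j : ℤ))) * ((m + i).choose (m + j)) * x j
         - (d : ℝ) ^ (-((m : ℤ) + i)) * ((m + i).choose (m + j)) * y j) = 0 := by
      intro j hj hne
      simp only [Finset.mem_Icc] at hj
      have hji : j < i := lt_of_le_of_ne hj.2 hne
      rw [IH j hji hj.1, sub_eq_zero]
      have hp : ((d : ℝ) ^ (m + j)) = (d : ℝ) ^ ((m : ℤ) + j) := by
        rw [← zpow_natCast]; push_cast; ring_nf
      have hAB : (d : ℝ) ^ (-(2 * (m : ℤ) + i + (j : ℤ))) * (d : ℝ) ^ ((m : ℤ) + j)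
          = (d : ℝ) ^ (-((m : ℤ) + i)) := by
        rw [← zpow_add₀ hd0]; congr 1; ring
      rw [hp]
      linear_combination (((m + i).choose (m + j) : ℝ) * y j) * hAB
    have hsingle := Finset.sum_eq_single_of_mem i
      (Finset.mem_Icc.mpr ⟨hi, le_refl i⟩) hterm
    rw [key] at hsingle
    have hch : ((m + i).choose (m + i) : ℝ) = 1 := by
      rw [Nat.choose_self]; norm_num
    rw [hch] at hsingle
    simp only [mul_one] at hsingle
    have h2 : (d : ℝ) ^ (-(2 * (m : ℤ) + i + (i : ℤ))) * x i
        = (d : ℝ) ^ (-((m : ℤ) + i)) * y i := by linarith [hsingle]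
    have e1 : (d : ℝ) ^ (-(2 * (m : ℤ) + i + (i : ℤ))) * (d : ℝ) ^ (2 * (m : ℤ) + i + i)
        = 1 := by
      rw [← zpow_add₀ hd0,
        show (-(2 * (m : ℤ) + i + (i : ℤ)) + (2 * (m : ℤ) + i + i)) = 0 from by ring,
        zpow_zero]
    have e2 : (d : ℝ) ^ (-((m : ℤ) + i)) * (d : ℝ) ^ (2 * (m : ℤ) + i + i)
        = (d : ℝ) ^ ((m : ℤ) + i) := by rw [← zpow_add₀ hd0]; congr 1; ring
    have hp : ((d : ℝ) ^ (m + i)) = (d : ℝ) ^ ((m : ℤ) + i) := by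
      rw [← zpow_natCast]; push_cast; ring_nf
    rw [hp]
    calc x i = (d : ℝ) ^ (2 * (m : ℤ) + i + i)
          * ((d : ℝ) ^ (-(2 * (m : ℤ) + i + (i : ℤ))) * x i) := by
          rw [← mul_assoc, mul_comm ((d : ℝ) ^ (2 * (m : ℤ) + i + i)), e1, one_mul]
      _ = (d : ℝ) ^ (2 * (m : ℤ) + i + i) * ((d : ℝ) ^ (-((m : ℤ) + i)) * y i) := by rw [h2]
      _ = (d : ℝ) ^ ((m : ℤ) + i) * y i := by
          rw [← mul_assoc, mul_comm ((d : ℝ) ^ (2 * (m : ℤ) + i + i)), e2]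
end
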